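/- Let G be a finite connected simple graph, T a spanning tree of G, and G̃ the lift of G with respect to T. For every edge e of G, the functions h_e take values in {0,1} and the set of edges of G̃ joining {x ∈ V(G̃) : h_e(x) = 0} to {x ∈ V(G̃) : h_e(x) = 1} is exactly the set of edges ẽ of G̃ with π(ẽ) = e. Equivalently: for every edge x y of G̃ projecting to the edge e′ of G and every edge e of G, h_e(x) ≠ h_e(y) if and only if e = e′. In particular, for each e ∈ E(G) the edges of G̃ projecting to e form an edge cut in G̃. -/

import Mathlib

open SimpleGraph

noncomputable section
attribute [local instance] Classical.propDecidable

variable {V : Type*}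

/-- The set `S` of edges of `G` not in the spanning tree `T`. -/
def nonTreeEdges (G T : SimpleGraph V) : Set (Sym2 V) := G.edgeSet \ T.edgeSet

/-- The lift `G̃` of `G` with respect to the spanning tree `T`: its vertices are the pairs
`(u, f)` with `u ∈ V(G)` and `f : S → ZMod 2`; `(u,f)` is adjacent to `(v,g)` iff
`uv ∈ E(G)` and `g` agrees with `f` except that `g(uv) = f(uv) + 1` when `uv ∈ S`
(so `g = f` when `uv ∈ E(T)`). -/
def liftGraph (G T : SimpleGraph V) :
    SimpleGraph (V × (nonTreeEdges G T → ZMod 2)) where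
  Adj p q := G.Adj p.1 q.1 ∧
    q.2 = fun e => p.2 e + (if (e : Sym2 V) = s(p.1, q.1) then 1 else 0)
  symm := by
    constructor
    rintro p q ⟨hadj, hf⟩
    refine ⟨hadj.symm, ?_⟩
    have key : ∀ a c : ZMod 2, a + c + c = a := by decide
    funext e
    have hs : s(q.1, p.1) = s(p.1, q.1) := Sym2.eq_swap
    rw [hs, hf]
    exact (key _ _).symm
  loopless := ⟨fun p h => G.irrefl (And.left h)⟩

/-- The projection `π : G̃ → G` on vertices, as a graph homomorphism. -/
def liftProj (G T : SimpleGraph V) : liftGraph G T →g G :=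
  ⟨Prod.fst, fun h => And.left h⟩

/-- The projection `π` on edges of the lift. -/
def edgeProj (G T : SimpleGraph V) :
    Sym2 (V × (nonTreeEdges G T → ZMod 2)) → Sym2 V :=
  Sym2.map Prod.fst

/-- Indicator (in `ZMod 2`) that an edge `s` joins the vertex set `B` to its complement:
it equals `1` iff exactly one endpoint of `s` lies in `B`. -/
def crossIndicator (B : Set V) : Sym2 V → ZMod 2 :=
  Sym2.lift ⟨fun p q => (if p ∈ B then 1 else 0) + (if q ∈ B then 1 else 0),
    fun p q => add_comm _ _⟩

/-- For a tree edge `e`, the side `B` of `T - e`: the component of `T - e` containing the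
second endpoint of `e`. -/
def treeSide (T : SimpleGraph V) (e : Sym2 V) : Set V :=
  {v | (T.deleteEdges {e}).Reachable (Quot.out e).2 v}

/-- The function `h_e` on the vertices of the lift: for `e ∈ S`, `h_e (v, f) = f e`;
for a tree edge `e`, `h_e (v, f)` is the indicator that `v` lies in the component `B`
of `T - e` plus the sum of the values `f s` over the edges `s ∈ S` joining the two
components of `T - e`. -/
def hcut (G T : SimpleGraph V) (e : Sym2 V) :
    V × (nonTreeEdges G T → ZMod 2) → ZMod 2 := fun p =>
  if he : e ∈ nonTreeEdges G T then p.2 ⟨e, he⟩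
  else (if p.1 ∈ treeSide T e then 1 else 0) +
    ∑ᶠ s : nonTreeEdges G T, crossIndicator (treeSide T e) s * p.2 s

/-- The cut-indicator map `F : V(G̃) → ℝ^{E(G)}`, `F(x)(e) = h_e(x) ∈ {0,1}`, with
`ℝ^{E(G)}` carrying the `ℓ₁`-norm. -/
def cutMap (G T : SimpleGraph V) :
    (V × (nonTreeEdges G T → ZMod 2)) → PiLp 1 (fun _ : G.edgeSet => ℝ) :=
  fun p => WithLp.toLp 1 fun e => ((hcut G T e p).val : ℝ)

section Aux

variable {V : Type*}

lemma crossIndicator_mk (B : Set V) (p q : V) :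
    crossIndicator B s(p, q) =
      (if p ∈ B then (1 : ZMod 2) else 0) + (if q ∈ B then 1 else 0) := rfl

lemma mem_treeSide_congr {T : SimpleGraph V} {e : Sym2 V} {u v : V}
    (h : (T.deleteEdges {e}).Reachable u v) :
    u ∈ treeSide T e ↔ v ∈ treeSide T e :=
  ⟨fun hu => hu.trans h, fun hv => hv.trans h.symm⟩

lemma crossIndicator_treeEdge {T : SimpleGraph V} (hT : T.IsAcyclic) {e e' : Sym2 V}
    (he : e ∈ T.edgeSet) (he' : e' ∈ T.edgeSet) :
    crossIndicator (treeSide T e) e' = if e = e' then 1 else 0 := by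
  by_cases heq : e = e'
  · subst heq
    have hout : s(e.out.1, e.out.2) = e := by
      rw [Sym2.mk, Prod.mk.eta, Quot.out_eq]
    have hbr : T.IsBridge e := (isAcyclic_iff_forall_edge_isBridge.mp hT) he
    rw [← hout] at hbr
    rw [SimpleGraph.isBridge_iff] at hbr
    have hb : e.out.2 ∈ treeSide T e := SimpleGraph.Reachable.refl _
    have ha : e.out.1 ∉ treeSide T e := by
      intro hmem
      exact hbr (by rw [hout]; exact hmem.symm)
    have hcongr : crossIndicator (treeSide T e) e
        = crossIndicator (treeSide T e) s(e.out.1, e.out.2) := by rw [hout]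
    rw [if_pos rfl, hcongr, crossIndicator_mk, if_neg ha, if_pos hb, zero_add]
  · rw [if_neg heq]
    induction e' using Sym2.inductionOn with
    | hf a b =>
      have hadj : (T.deleteEdges {e}).Adj a b := by
        rw [SimpleGraph.deleteEdges_adj]
        exact ⟨he', by simpa using fun h => heq h.symm⟩
      have hiff := mem_treeSide_congr (e := e) hadj.reachable
      rw [crossIndicator_mk]
      by_cases hb : a ∈ treeSide T e
      · rw [if_pos hb, if_pos (hiff.mp hb)]; decide
      · rw [if_neg hb, if_neg (fun h => hb (hiff.mpr h))]; decide

lemma hcut_adj {V : Type*} [Fintype V] (G T : SimpleGraph V)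
    (hT : T.IsTree) {e : Sym2 V} (heG : e ∈ G.edgeSet)
    {x y : V × (nonTreeEdges G T → ZMod 2)} (hxy : (liftGraph G T).Adj x y) :
    hcut G T e x + hcut G T e y = if e = s(x.1, y.1) then 1 else 0 := by
  obtain ⟨hadj, hf⟩ := (show G.Adj x.1 y.1 ∧ y.2 = fun e => x.2 e + (if (e : Sym2 V) = s(x.1, y.1) then 1 else 0) from hxy)
  haveI : Fintype (nonTreeEdges G T) := Fintype.ofFinite _
  have htwo : (2 : ZMod 2) = 0 := rfl
  set E : Sym2 V := s(x.1, y.1) with hE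
  have hEG : E ∈ G.edgeSet := hadj
  by_cases he : e ∈ nonTreeEdges G T
  · -- e ∈ S
    rw [hcut, hcut, dif_pos he, dif_pos he, hf]
    simp only
    have : (if ((⟨e, he⟩ : nonTreeEdges G T) : Sym2 V) = E then (1 : ZMod 2) else 0)
        = if e = E then 1 else 0 := rfl
    rw [this]
    linear_combination (x.2 ⟨e, he⟩) * htwo
  · -- e is a tree edge
    have heT : e ∈ T.edgeSet := by
      by_contra h
      exact he ⟨heG, h⟩
    set B := treeSide T e with hB
    set c : Sym2 V → ZMod 2 := crossIndicator B with hc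
    rw [hcut, hcut, dif_neg he, dif_neg he]
    rw [finsum_eq_sum_of_fintype, finsum_eq_sum_of_fintype]
    have hy2 : ∑ s : nonTreeEdges G T, c s * y.2 s
        = (∑ s : nonTreeEdges G T, c s * x.2 s)
          + (if hES : E ∈ nonTreeEdges G T then c E else 0) := by
      rw [hf]
      simp only [mul_add]
      rw [Finset.sum_add_distrib]
      congr 1
      by_cases hES : E ∈ nonTreeEdges G T
      · rw [dif_pos hES]
        have hterm : ∀ s : nonTreeEdges G T, c ↑s * (if (s : Sym2 V) = E then 1 else 0)
            = if s = (⟨E, hES⟩ : nonTreeEdges G T) then c E else 0 := by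
          intro s
          by_cases h : s = (⟨E, hES⟩ : nonTreeEdges G T)
          · subst h; simp
          · rw [if_neg h, if_neg (fun hh => h (Subtype.ext hh)), mul_zero]
        calc ∑ s : nonTreeEdges G T, c ↑s * (if (s : Sym2 V) = E then 1 else 0)
            = ∑ s : nonTreeEdges G T,
                if s = (⟨E, hES⟩ : nonTreeEdges G T) then c E else 0 :=
              Finset.sum_congr rfl (fun s _ => hterm s)
          _ = c E := by rw [Finset.sum_ite_eq' Finset.univ]; simp
      · rw [dif_neg hES]
        apply Finset.sum_eq_zero
        intro s _
        rw [if_neg (fun hh => hES (by rw [← hh]; exact s.2)), mul_zero]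
    rw [hy2]
    have hcross : (if x.1 ∈ B then (1 : ZMod 2) else 0) + (if y.1 ∈ B then 1 else 0)
        = c E := (crossIndicator_mk B x.1 y.1).symm
    by_cases hES : E ∈ nonTreeEdges G T
    · rw [dif_pos hES]
      have heE : e ≠ E := fun h => he (h ▸ hES)
      rw [if_neg heE]
      linear_combination hcross + (c E + ∑ s : nonTreeEdges G T, c ↑s * x.2 s) * htwo
    · rw [dif_neg hES]
      have hET : E ∈ T.edgeSet := by
        by_contra h
        exact hES ⟨hEG, h⟩
      have : c E = if e = E then 1 else 0 := crossIndicator_treeEdge hT.IsAcyclic heT hET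
      rw [← this, ← hcross]
      linear_combination (∑ s : nonTreeEdges G T, c ↑s * x.2 s) * htwo

end Aux

/-- Let `G` be a finite connected simple graph, `T` a spanning tree of `G`, and `G̃` the
lift of `G` with respect to `T`. For every edge `e` of `G`: an edge of `G̃` joins the set
`{h_e = 0}` to the set `{h_e = 1}` if and only if it projects under `π` to `e`
(equivalently, for adjacent `x, y` in `G̃` with projected edge `e′`, `h_e(x) ≠ h_e(y)` iff
`e = e′`). In particular, for each `e ∈ E(G)` the edges of `G̃` projecting to `e` form an
edge cut in `G̃`. -/
theorem liftGraph_cut_edges {V : Type*} [Fintype V] (G T : SimpleGraph V)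
    (hG : G.Connected) (hT : T.IsTree) (hTG : T ≤ G) :
    (∀ e ∈ G.edgeSet, ∀ x y : V × (nonTreeEdges G T → ZMod 2),
        (liftGraph G T).Adj x y →
          (hcut G T e x ≠ hcut G T e y ↔ e = edgeProj G T s(x, y))) ∧
      ∀ e ∈ G.edgeSet, ∃ P : Set (V × (nonTreeEdges G T → ZMod 2)),
        ∀ x y : V × (nonTreeEdges G T → ZMod 2), (liftGraph G T).Adj x y →
          ((x ∈ P ↔ y ∉ P) ↔ e = edgeProj G T s(x, y)) := by
  have main : ∀ e ∈ G.edgeSet, ∀ x y : V × (nonTreeEdges G T → ZMod 2),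
      (liftGraph G T).Adj x y →
        (hcut G T e x ≠ hcut G T e y ↔ e = edgeProj G T s(x, y)) := by
    intro e heG x y hxy
    have h := hcut_adj G T hT heG hxy
    have hproj : edgeProj G T s(x, y) = s(x.1, y.1) := rfl
    rw [hproj]
    constructor
    · intro hne
      by_contra h2
      rw [if_neg h2] at h
      have key : ∀ a b : ZMod 2, a + b = 0 → a = b := by decide
      exact hne (key _ _ h)
    · intro h2 heq
      rw [if_pos h2, heq] at h
      have key : ∀ a : ZMod 2, a + a = 1 → False := by decide
      exact key _ h
  refine ⟨main, fun e heG => ⟨{p | hcut G T e p = 1}, fun x y hxy => ?_⟩⟩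
  rw [← main e heG x y hxy]
  simp only [Set.mem_setOf_eq]
  revert x y
  have key : ∀ a b : ZMod 2, ((a = 1) ↔ ¬(b = 1)) ↔ a ≠ b := by decide
  intro x y _
  exact key _ _


end
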